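/- Fix ω ∈ Ω^ℤ and set M_ω = {x ∈ M : (x, ω) ∈ Θ₀} and, for n ≥ 1, M^n_ω = {x ∈ M : (f^{-n}_ω x, ((θ^{-n}ω)_k)_{k≥1}) ∈ Θ_n⁺}. Then for every δ > 0 there exists N₀ = N₀(δ, ω) ∈ ℕ such that for all n ≥ N₀ one has M^n_ω ⊂ N_δ(M_ω), the open δ-neighborhood of M_ω. In particular, sup_{x ∈ M^n_ω} dist(x, M_ω) → 0 as n → ∞ (with the convention that the supremum over the empty set is 0). -/
import Mathlib


open Filter

/-- The backward composition `f^{-n}_ω = f^{-1}_{ω_{-(n-1)}} ∘ ⋯ ∘ f^{-1}_{ω_0}`. -/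
noncomputable def bwdPast {Ω M : Type*} [TopologicalSpace M] (f : Ω → Homeomorph M M)
    (ω : ℤ → Ω) : ℕ → M → M
  | 0 => id
  | n + 1 => ⇑(f (ω (-(n : ℤ)))).symm ∘ (bwdPast f ω n)

/-- The two-sided skew product `τ (x, ω) = (f_{ω 1} x, θ ω)` on `M × Ω^ℤ`. -/
noncomputable def skewTau {Ω M : Type*} [TopologicalSpace M] (f : Ω → Homeomorph M M) :
    M × (ℤ → Ω) → M × (ℤ → Ω) :=
  fun p => (f (p.2 1) p.1, fun k => p.2 (k + 1))

lemma skewTau_iter_snd {Ω M : Type*} [TopologicalSpace M] (f : Ω → Homeomorph M M)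
    (n : ℕ) (p : M × (ℤ → Ω)) (k : ℤ) :
    ((skewTau f)^[n] p).2 k = p.2 (k + n) := by
  induction n generalizing p with
  | zero => simp
  | succ n ih =>
    rw [Function.iterate_succ_apply, ih]
    show p.2 (k + n + 1) = p.2 (k + (n + 1 : ℕ))
    norm_num
    ring_nf

lemma skewTau_iter_fst {Ω M : Type*} [TopologicalSpace M] (f : Ω → Homeomorph M M)
    (ω : ℤ → Ω) :
    ∀ (n : ℕ) (p : M × (ℤ → Ω)) (x : M),
      (∀ j : ℕ, p.2 ((j : ℤ) + 1) = ω ((j : ℤ) + 1 - (n : ℤ))) →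
      p.1 = bwdPast f ω n x → ((skewTau f)^[n] p).1 = x := by
  intro n
  induction n with
  | zero =>
    intro p x _ h
    simpa [bwdPast] using h
  | succ n ih =>
    intro p x hmatch hp
    rw [Function.iterate_succ_apply]
    apply ih (skewTau f p) x
    · intro j
      show p.2 ((j : ℤ) + 1 + 1) = ω ((j : ℤ) + 1 - (n : ℤ))
      have h := hmatch (j + 1)
      push_cast at h ⊢
      rw [show (j : ℤ) + 1 + 1 = (j : ℤ) + 1 + 1 from rfl, h]
      congr 1
      ring
    · show f (p.2 1) p.1 = bwdPast f ω n x
      have h1 : p.2 1 = ω (-(n : ℤ)) := by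
        have h := hmatch 0
        push_cast at h
        rw [h]
        congr 1
        ring
      have hp' : p.1 = (f (ω (-(n : ℤ)))).symm (bwdPast f ω n x) := hp
      rw [hp', h1, Homeomorph.apply_symm_apply]

lemma mem_proj_exists {Ω M : Type*} [TopologicalSpace M] (f : Ω → Homeomorph M M)
    (ω : ℤ → Ω) (Θ0 : Set (M × (ℤ → Ω))) (n : ℕ) (x : M)
    (hx : (bwdPast f ω n x, fun j : ℕ => ω ((j : ℤ) + 1 - (n : ℤ))) ∈
        (fun q : M × (ℤ → Ω) => (q.1, fun j : ℕ => q.2 ((j : ℤ) + 1))) ''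
          (Θ0 ∩ (skewTau f)^[n] ⁻¹' Θ0)) :
    ∃ η : ℤ → Ω, (x, η) ∈ Θ0 ∧ ∀ k : ℤ, 1 - (n : ℤ) ≤ k → η k = ω k := by
  obtain ⟨q, ⟨hq0, hqn⟩, hq⟩ := hx
  have hq1 : q.1 = bwdPast f ω n x := congrArg Prod.fst hq
  have hq2 : ∀ j : ℕ, q.2 ((j : ℤ) + 1) = ω ((j : ℤ) + 1 - (n : ℤ)) :=
    fun j => congrFun (congrArg Prod.snd hq) j
  refine ⟨((skewTau f)^[n] q).2, ?_, ?_⟩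
  · have h1 : ((skewTau f)^[n] q).1 = x := skewTau_iter_fst f ω n q x hq2 hq1
    have hmem : (skewTau f)^[n] q ∈ Θ0 := hqn
    rwa [show (skewTau f)^[n] q = (x, ((skewTau f)^[n] q).2) from by
      rw [← h1]] at hmem
  · intro k hk
    rw [skewTau_iter_snd]
    have hj : (0 : ℤ) ≤ k + n - 1 := by omega
    have h := hq2 (k + n - 1).toNat
    rw [Int.toNat_of_nonneg hj] at h
    rw [show k + (n : ℤ) - 1 + 1 = k + n from by ring] at h
    rw [h]
    congr 1
    ring

/-- Lemma 4.1: the uniformity sets `M^n_ω` of `μ^n_ω`-typical points, built from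
`Θ_n = Θ₀ ∩ τ^{-n} Θ₀` with `Θ₀` compact, converge to the uniformity set
`M_ω = {x : (x, ω) ∈ Θ₀}`: for every `δ > 0` and all large `n`, `M^n_ω` is contained
in the `δ`-neighborhood of `M_ω`; in particular `sup_{x ∈ M^n_ω} dist(x, M_ω) → 0`
(with `sSup ∅ = 0`). -/
theorem uniformity_sets_converge
    {Ω M : Type*} [TopologicalSpace Ω] [PolishSpace Ω]
    [MetricSpace M] [CompactSpace M]
    (f : Ω → Homeomorph M M)
    (Θ0 : Set (M × (ℤ → Ω))) (hΘ0 : IsCompact Θ0)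
    (ω : ℤ → Ω) :
    (∀ δ : ℝ, 0 < δ →
      ∃ N0 : ℕ, ∀ n : ℕ, N0 ≤ n →
        {x : M | (bwdPast f ω n x, fun j : ℕ => ω ((j : ℤ) + 1 - (n : ℤ))) ∈
            (fun q : M × (ℤ → Ω) => (q.1, fun j : ℕ => q.2 ((j : ℤ) + 1))) ''
              (Θ0 ∩ (skewTau f)^[n] ⁻¹' Θ0)} ⊆
          {x : M | ∃ y : M, (y, ω) ∈ Θ0 ∧ dist x y < δ}) ∧
    Tendsto (fun n : ℕ =>
        sSup ((fun x : M => Metric.infDist x {y : M | (y, ω) ∈ Θ0}) ''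
          {x : M | (bwdPast f ω n x, fun j : ℕ => ω ((j : ℤ) + 1 - (n : ℤ))) ∈
            (fun q : M × (ℤ → Ω) => (q.1, fun j : ℕ => q.2 ((j : ℤ) + 1))) ''
              (Θ0 ∩ (skewTau f)^[n] ⁻¹' Θ0)}))
      atTop (nhds 0) := by
  set S : ℕ → Set M := fun n =>
    {x : M | (bwdPast f ω n x, fun j : ℕ => ω ((j : ℤ) + 1 - (n : ℤ))) ∈
        (fun q : M × (ℤ → Ω) => (q.1, fun j : ℕ => q.2 ((j : ℤ) + 1))) ''
          (Θ0 ∩ (skewTau f)^[n] ⁻¹' Θ0)} with hS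
  have key : ∀ δ : ℝ, 0 < δ → ∃ N0 : ℕ, ∀ n : ℕ, N0 ≤ n →
      S n ⊆ {x : M | ∃ y : M, (y, ω) ∈ Θ0 ∧ dist x y < δ} := by
    intro δ hδ
    by_contra hcon
    push_neg at hcon
    simp only [Set.not_subset] at hcon
    choose n hn x hxS hxT using hcon
    simp only [Set.mem_setOf_eq, not_exists, not_and, not_lt] at hxT
    choose η hηΘ hηeq using fun N => mem_proj_exists f ω Θ0 (n N) (x N) (hxS N)
    obtain ⟨z, hz, φ, hφ, hconv⟩ :=
      hΘ0.tendsto_subseq (x := fun N => (x N, η N)) (fun N => hηΘ N)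
    have hx_conv : Tendsto (fun k => x (φ k)) atTop (nhds z.1) :=
      (continuous_fst.tendsto z).comp hconv
    have hz2 : ∀ m : ℤ, z.2 m = ω m := by
      intro m
      have hη_conv : Tendsto (fun k => η (φ k) m) atTop (nhds (z.2 m)) :=
        (((continuous_apply m).comp continuous_snd).tendsto z).comp hconv
      refine tendsto_nhds_unique hη_conv ?_
      refine Tendsto.congr' ?_ (tendsto_const_nhds (x := ω m))
      filter_upwards [eventually_ge_atTop (1 - m).toNat] with k hk
      have h1 : (1 : ℤ) - m ≤ ((1 - m).toNat : ℤ) := Int.self_le_toNat _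
      have h2 : ((1 - m).toNat : ℤ) ≤ (k : ℤ) := by exact_mod_cast hk
      have h3 : (k : ℤ) ≤ (φ k : ℤ) := by exact_mod_cast hφ.le_apply
      have h4 : (φ k : ℤ) ≤ (n (φ k) : ℤ) := by exact_mod_cast hn (φ k)
      exact (hηeq (φ k) m (by omega)).symm
    have hzΘ : (z.1, ω) ∈ Θ0 := by
      have : z = (z.1, ω) := Prod.ext rfl (funext hz2)
      rwa [← this]
    have hfar : ∀ k, δ ≤ dist (x (φ k)) z.1 := fun k => hxT (φ k) z.1 hzΘ
    have hev : ∀ᶠ k in atTop, dist (x (φ k)) z.1 < δ := by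
      have := hx_conv (Metric.ball_mem_nhds z.1 hδ)
      filter_upwards [this] with k hk
      exact hk
    obtain ⟨k, hk⟩ := hev.exists
    exact absurd hk (not_lt.mpr (hfar k))
  refine ⟨key, ?_⟩
  rw [Metric.tendsto_atTop]
  intro ε hε
  obtain ⟨N0, hN0⟩ := key (ε / 2) (by linarith)
  refine ⟨N0, fun n hn => ?_⟩
  set g := sSup ((fun x : M => Metric.infDist x {y : M | (y, ω) ∈ Θ0}) '' S n) with hg
  have h1 : 0 ≤ g := by
    apply Real.sSup_nonneg
    rintro r ⟨x, _, rfl⟩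
    exact Metric.infDist_nonneg
  have h2 : g ≤ ε / 2 := by
    apply Real.sSup_le
    · rintro r ⟨x, hx, rfl⟩
      obtain ⟨y, hy, hd⟩ := hN0 n hn hx
      exact le_trans (Metric.infDist_le_dist_of_mem hy) hd.le
    · linarith
  rw [Real.dist_eq, sub_zero, abs_of_nonneg h1]
  linarith
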